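/- Covariant stability of the exact scatteringless dispersion relation along purely imaginary wavenumbers: let λ > 0 and r ∈ (0,1). Define S(r) = √( ((1−λ)/2)² + λ·artanh(r)/r ), Γ(r) = −(1+λ)/2 + S(r), and χ(r) = r·( (1−λ)/2 + S(r) ) = r(1+Γ(r)). Then Γ(r) ≥ 0 and χ(r) − Γ(r) ≥ 0; that is, the covariant-stability discriminant |Im(kτ)| − Im(ωτ) = |χ| − Γ is nonnegative. -/

import Mathlib

/-!
Writing `a = artanh r / r`, the quantity `Γ = -(1+λ)/2 + √(((1-λ)/2)² + λa)` is the larger root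
of `(Γ + 1)(Γ + λ) = λa`, so `0 ≤ Γ ≤ a - 1` as soon as `a ≥ 1`. The Taylor series of `artanh`
and `log y ≤ y - 1` give `1 ≤ a ≤ 1/(1-r)`, hence `0 ≤ Γ ≤ r/(1-r)`, and
`χ - Γ = r(1 + Γ) - Γ = r - (1-r)Γ ≥ 0`.
-/

noncomputable section
open Real

/-- The inverse hyperbolic tangent, `artanh x = (1/2) log((1+x)/(1−x))`. -/
def artanh (x : ℝ) : ℝ := (1 / 2) * Real.log ((1 + x) / (1 - x))

lemma self_le_artanh {x : ℝ} (h0 : 0 ≤ x) (h1 : x < 1) : x ≤ _root_.artanh x := by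
  have hseries := hasSum_log_sub_log_of_abs_lt_one (abs_lt.2 ⟨by linarith, h1⟩)
  have hfirst := le_hasSum hseries 0 fun k _ => by positivity
  rw [_root_.artanh, log_div (by linarith) (by linarith)]
  norm_num at hfirst
  linarith

lemma artanh_le_div_one_sub {x : ℝ} (h0 : -1 < x) (h1 : x < 1) :
    _root_.artanh x ≤ x / (1 - x) := by
  have hx : 0 < 1 - x := by linarith
  have hlog := log_le_sub_one_of_pos (div_pos (by linarith : 0 < 1 + x) hx)
  have hsub : (1 + x) / (1 - x) - 1 = 2 * (x / (1 - x)) := by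
    field_simp
    ring
  rw [_root_.artanh]
  linarith

def dispersionRoot (lam a : ℝ) : ℝ := -(1 + lam) / 2 + √(((1 - lam) / 2) ^ 2 + lam * a)

variable {lam a : ℝ}

lemma dispersionRoot_nonneg (hlam : 0 ≤ lam) (ha : 1 ≤ a) : 0 ≤ dispersionRoot lam a := by
  have : (1 + lam) / 2 ≤ √(((1 - lam) / 2) ^ 2 + lam * a) :=
    le_sqrt_of_sq_le (by nlinarith)
  rw [dispersionRoot]
  linarith

lemma dispersionRoot_le_sub_one (hlam : 0 ≤ lam) (ha : 1 ≤ a) : dispersionRoot lam a ≤ a - 1 := by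
  have : √(((1 - lam) / 2) ^ 2 + lam * a) ≤ a + (lam - 1) / 2 :=
    (sqrt_le_left (by linarith)).2 (by nlinarith)
  rw [dispersionRoot]
  linarith

theorem scatteringless_imaginary_axis_stability
    (lam : ℝ) (hlam : 0 < lam) (r : ℝ) (hr : r ∈ Set.Ioo (0 : ℝ) 1) :
    0 ≤ -(1 + lam) / 2 + Real.sqrt (((1 - lam) / 2) ^ 2 + lam * _root_.artanh r / r) ∧
    0 ≤ r * ((1 - lam) / 2 + Real.sqrt (((1 - lam) / 2) ^ 2 + lam * _root_.artanh r / r)) -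
        (-(1 + lam) / 2 + Real.sqrt (((1 - lam) / 2) ^ 2 + lam * _root_.artanh r / r)) := by
  obtain ⟨hr0, hr1⟩ := hr
  have hpos : 0 < 1 - r := by linarith
  have ha_ge : 1 ≤ _root_.artanh r / r := (one_le_div hr0).2 (self_le_artanh hr0.le hr1)
  have ha_le : _root_.artanh r / r ≤ 1 / (1 - r) := by
    rw [div_le_iff₀ hr0, one_div_mul_eq_div]
    exact artanh_le_div_one_sub (by linarith) hr1
  have hΓ0 := dispersionRoot_nonneg hlam.le ha_ge
  have hΓ : (1 - r) * dispersionRoot lam (_root_.artanh r / r) ≤ r := by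
    have hΓa := dispersionRoot_le_sub_one hlam.le ha_ge
    calc (1 - r) * dispersionRoot lam (_root_.artanh r / r)
        ≤ (1 - r) * (1 / (1 - r) - 1) := by gcongr; linarith
      _ = r := by field_simp; ring
  simp only [dispersionRoot] at hΓ0 hΓ
  simp only [mul_div_assoc]
  exact ⟨hΓ0, by linarith⟩
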